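/- Let λ be a Lagrangian subspace of H and let W be a closed subspace of λ such that the quotient λ / W is finite-dimensional. Then for every Lagrangian subspace μ of H, the pair (λ, μ) is a Fredholm pair if and only if (W, μ) is a Fredholm pair. -/
import Mathlib


open scoped RealInnerProductSpace

/-- The annihilator of a set `μ` with respect to the symplectic form `ω(x, y) = ⟪J x, y⟫`. -/
def omegaAnn {H : Type*} [NormedAddCommGroup H] [InnerProductSpace ℝ H]
    (J : H →L[ℝ] H) (μ : Set H) : Set H :=
  {x : H | ∀ y ∈ μ, ⟪J x, y⟫ = 0}

/-- A pair of closed subspaces is a Fredholm pair if their intersection is finite-dimensional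
and their sum is closed and of finite codimension. -/
def IsFredholmPair {H : Type*} [NormedAddCommGroup H] [InnerProductSpace ℝ H]
    (μ ν : Submodule ℝ H) : Prop :=
  FiniteDimensional ℝ ↥(μ ⊓ ν) ∧ IsClosed ((μ ⊔ ν : Submodule ℝ H) : Set H) ∧
    FiniteDimensional ℝ (H ⧸ (μ ⊔ ν))

/-- The `ω`-annihilator of any set is closed. -/
lemma isClosed_omegaAnn {H : Type*} [NormedAddCommGroup H] [InnerProductSpace ℝ H]
    (J : H →L[ℝ] H) (s : Set H) : IsClosed (omegaAnn J s) := by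
  have : omegaAnn J s = ⋂ y ∈ s, (fun x => ⟪J x, y⟫) ⁻¹' {(0 : ℝ)} := by
    ext x; simp [omegaAnn]
  rw [this]
  exact isClosed_biInter fun y _ =>
    IsClosed.preimage (Continuous.inner J.continuous continuous_const) isClosed_singleton

/-- If a submodule and the quotient by it are finite-dimensional, so is the whole module. -/
lemma fd_of_fd_quot {M : Type*} [AddCommGroup M] [Module ℝ M] (S : Submodule ℝ M)
    (h1 : FiniteDimensional ℝ S) (h2 : FiniteDimensional ℝ (M ⧸ S)) : FiniteDimensional ℝ M := by
  obtain ⟨T, hT⟩ := Submodule.exists_isCompl S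
  haveI := h1; haveI := h2
  haveI : FiniteDimensional ℝ T := (Submodule.quotientEquivOfIsCompl S T hT).finiteDimensional
  exact Module.Finite.equiv (Submodule.prodEquivOfIsCompl S T hT)

/-- The sum of a closed submodule and a finite-dimensional submodule is closed. -/
lemma isClosed_sup_fd {E : Type*} [NormedAddCommGroup E] [NormedSpace ℝ E] (p q : Submodule ℝ E)
    (hp : IsClosed (p : Set E)) [FiniteDimensional ℝ q] :
    IsClosed ((p ⊔ q : Submodule ℝ E) : Set E) := by
  haveI : IsClosed (p : Set E) := hp
  haveI : FiniteDimensional ℝ (q.map p.mkQ) := Module.Finite.map q p.mkQ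
  have h1 : ((p ⊔ q : Submodule ℝ E) : Set E) = p.mkQ ⁻¹' (q.map p.mkQ : Set (E ⧸ p)) := by
    ext x
    simp only [Set.mem_preimage, SetLike.mem_coe, ← Submodule.mem_comap,
      Submodule.comap_map_eq, Submodule.ker_mkQ, sup_comm]
  rw [h1]
  exact (Submodule.closed_of_finiteDimensional _).preimage p.isOpenQuotientMap_mkQ.continuous

/-- Key analytic lemma: if `A`, `B` are closed, `A ⊓ B` is finite-dimensional, `A ⊔ B` is
closed, and `W ≤ A` is closed, then `W ⊔ B` is closed. -/
lemma isClosed_sub_sup {E : Type*} [NormedAddCommGroup E] [NormedSpace ℝ E] [CompleteSpace E]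
    {A B W : Submodule ℝ E} (hA : IsClosed (A : Set E)) (hB : IsClosed (B : Set E))
    (hW : IsClosed (W : Set E)) (hWA : W ≤ A)
    (hfin : FiniteDimensional ℝ ↥(A ⊓ B)) (hAB : IsClosed ((A ⊔ B : Submodule ℝ E) : Set E)) :
    IsClosed ((W ⊔ B : Submodule ℝ E) : Set E) := by
  haveI : CompleteSpace ↥A := hA.completeSpace_coe
  haveI : CompleteSpace ↥B := hB.completeSpace_coe
  haveI : CompleteSpace ↥(A ⊔ B) := hAB.completeSpace_coe
  set S : (↥A × ↥B) →L[ℝ] E :=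
    A.subtypeL.comp (ContinuousLinearMap.fst ℝ ↥A ↥B) +
      B.subtypeL.comp (ContinuousLinearMap.snd ℝ ↥A ↥B) with hS
  have hmem : ∀ y : ↥A × ↥B, S y ∈ A ⊔ B := fun y =>
    add_mem (Submodule.mem_sup_left y.1.2) (Submodule.mem_sup_right y.2.2)
  set T : (↥A × ↥B) →L[ℝ] ↥(A ⊔ B) := S.codRestrict (A ⊔ B) hmem with hT
  set Tl : (↥A × ↥B) →ₗ[ℝ] ↥(A ⊔ B) := (T : (↥A × ↥B) →ₗ[ℝ] ↥(A ⊔ B)) with hTl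
  have hTval : ∀ y : ↥A × ↥B, (Tl y : E) = (y.1 : E) + (y.2 : E) := fun y => rfl
  have hTsurj : Function.Surjective Tl := by
    rintro ⟨x, hx⟩
    rcases Submodule.mem_sup.mp hx with ⟨a, ha, b, hb, rfl⟩
    exact ⟨(⟨a, ha⟩, ⟨b, hb⟩), rfl⟩
  have hopen : IsOpenMap Tl := T.isOpenMap hTsurj
  set K := LinearMap.ker Tl with hK
  have hker : ∀ k : ↥A × ↥B, k ∈ K → (k.1 : E) + (k.2 : E) = 0 := by
    intro k hk
    have h0 : (Tl k : E) = ((0 : ↥(A ⊔ B)) : E) :=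
      congrArg Subtype.val (LinearMap.mem_ker.mp hk)
    rw [hTval] at h0; simpa using h0
  haveI : FiniteDimensional ℝ K := by
    set f : (↥A × ↥B) →ₗ[ℝ] E := A.subtype.comp (LinearMap.fst ℝ ↥A ↥B) with hf
    have hfr : ∀ k : K, f.domRestrict K k ∈ A ⊓ B := by
      intro k
      refine ⟨k.1.1.2, ?_⟩
      have h1 : (k.1.1 : E) = -(k.1.2 : E) := eq_neg_of_add_eq_zero_left (hker k.1 k.2)
      show (k.1.1 : E) ∈ B
      rw [h1]; exact neg_mem k.1.2.2
    have hinj : Function.Injective (LinearMap.codRestrict (A ⊓ B) (f.domRestrict K) hfr) := by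
      intro a b hab
      have h1 : (a.1.1 : E) = (b.1.1 : E) := congrArg (fun v : ↥(A ⊓ B) => (v : E)) hab
      have h2 : (a.1.2 : E) = (b.1.2 : E) := by
        have ha' : (a.1.2 : E) = -(a.1.1 : E) := eq_neg_of_add_eq_zero_right (hker a.1 a.2)
        have hb' : (b.1.2 : E) = -(b.1.1 : E) := eq_neg_of_add_eq_zero_right (hker b.1 b.2)
        rw [ha', hb', h1]
      exact Subtype.ext (Prod.ext (Subtype.ext h1) (Subtype.ext h2))
    exact FiniteDimensional.of_injective _ hinj
  set Z : Submodule ℝ (↥A × ↥B) := (W.comap A.subtype).prod ⊤ with hZ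
  have hZclosed : IsClosed (Z : Set (↥A × ↥B)) := by
    have : (Z : Set (↥A × ↥B)) = (Subtype.val ⁻¹' (W : Set E)) ×ˢ Set.univ := by
      ext y; simp [hZ, Set.mem_prod]
    rw [this]
    exact (hW.preimage continuous_subtype_val).prod isClosed_univ
  set C : Submodule ℝ (↥A × ↥B) := Z ⊔ K with hC
  have hCclosed : IsClosed (C : Set (↥A × ↥B)) := isClosed_sup_fd Z K hZclosed
  have hCK : Submodule.comap Tl (Submodule.map Tl C) = C := by
    rw [Submodule.comap_map_eq]
    exact sup_eq_left.mpr le_sup_right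
  have himgclosed : IsClosed ((Submodule.map Tl C : Submodule ℝ ↥(A ⊔ B)) : Set ↥(A ⊔ B)) := by
    rw [← isOpen_compl_iff]
    have himg : ((Submodule.map Tl C : Submodule ℝ ↥(A ⊔ B)) : Set ↥(A ⊔ B))ᶜ
        = Tl '' ((C : Set (↥A × ↥B))ᶜ) := by
      ext x
      simp only [Set.mem_compl_iff, SetLike.mem_coe, Set.mem_image]
      constructor
      · intro hx
        obtain ⟨y, rfl⟩ := hTsurj x
        exact ⟨y, fun hy => hx (Submodule.mem_map_of_mem hy), rfl⟩
      · rintro ⟨y, hy, rfl⟩ hmem'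
        exact hy (by rw [← hCK]; exact hmem')
    rw [himg]
    exact hopen _ hCclosed.isOpen_compl
  have hfinal : ((W ⊔ B : Submodule ℝ E) : Set E)
      = Subtype.val '' ((Submodule.map Tl C : Submodule ℝ ↥(A ⊔ B)) : Set ↥(A ⊔ B)) := by
    ext x
    simp only [SetLike.mem_coe, Set.mem_image]
    constructor
    · intro hx
      rcases Submodule.mem_sup.mp hx with ⟨w, hw, b, hb, rfl⟩
      refine ⟨Tl (⟨w, hWA hw⟩, ⟨b, hb⟩),
        Submodule.mem_map_of_mem (le_sup_left (α := Submodule ℝ (↥A × ↥B)) ?_), rfl⟩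
      exact ⟨hw, trivial⟩
    · rintro ⟨⟨x', hx'⟩, hmem', rfl⟩
      rcases Submodule.mem_map.mp hmem' with ⟨y, hy, hxy⟩
      rcases Submodule.mem_sup.mp hy with ⟨z, hz, k, hk, rfl⟩
      have h2 : ((z + k).1 : E) + ((z + k).2 : E) = x' := by
        rw [← hTval (z + k)]
        exact congrArg Subtype.val hxy
      simp only [Prod.fst_add, Prod.snd_add, Submodule.coe_add] at h2
      show x' ∈ W ⊔ B
      have hx'' : x' = (z.1 : E) + (z.2 : E) := by
        rw [← h2, show ((z.1 : E) + (k.1 : E) + ((z.2 : E) + (k.2 : E)))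
          = ((z.1 : E) + (z.2 : E)) + ((k.1 : E) + (k.2 : E)) from by abel, hker k hk, add_zero]
      rw [hx'']
      exact add_mem (Submodule.mem_sup_left hz.1) (Submodule.mem_sup_right z.2.2)
  rw [hfinal]
  exact (hAB.isClosedEmbedding_subtypeVal).isClosedMap _ himgclosed

/-- Let `W` be a closed, finite-codimensional subspace of a Lagrangian `λ`. Then for every
Lagrangian `μ`, `(λ, μ)` is a Fredholm pair iff `(W, μ)` is a Fredholm pair. -/
theorem fredholmPair_iff_finite_codim_subspace
    {H : Type*} [NormedAddCommGroup H] [InnerProductSpace ℝ H] [CompleteSpace H]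
    (J : H →L[ℝ] H) (hJ2 : ∀ x : H, J (J x) = -x)
    (hJorth : ∀ x y : H, ⟪J x, J y⟫ = ⟪x, y⟫)
    (lam W : Submodule ℝ H)
    (hlam : omegaAnn J (lam : Set H) = (lam : Set H))
    (hWle : W ≤ lam) (hWclosed : IsClosed (W : Set H))
    (hWcodim : FiniteDimensional ℝ (↥lam ⧸ (W.comap lam.subtype))) :
    ∀ μ : Submodule ℝ H, omegaAnn J (μ : Set H) = (μ : Set H) →
      (IsFredholmPair lam μ ↔ IsFredholmPair W μ) := by
  intro μ hμ
  haveI := hWcodim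
  have hlamclosed : IsClosed (lam : Set H) := hlam ▸ isClosed_omegaAnn J _
  have hμclosed : IsClosed (μ : Set H) := hμ ▸ isClosed_omegaAnn J _
  -- a finite-dimensional complement `F` of `W` inside `lam`
  obtain ⟨F', hF'⟩ := Submodule.exists_isCompl (W.comap lam.subtype)
  haveI : FiniteDimensional ℝ F' :=
    (Submodule.quotientEquivOfIsCompl (W.comap lam.subtype) F' hF').finiteDimensional
  set F : Submodule ℝ H := F'.map lam.subtype with hF
  haveI : FiniteDimensional ℝ F := Module.Finite.map F' lam.subtype
  have hWF : W ⊔ F = lam := by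
    have h1 : Submodule.map lam.subtype ((W.comap lam.subtype) ⊔ F') = lam := by
      rw [hF'.sup_eq_top, Submodule.map_top, Submodule.range_subtype]
    rw [Submodule.map_sup, Submodule.map_comap_subtype, inf_eq_right.mpr hWle] at h1
    exact h1
  have hsup : lam ⊔ μ = (W ⊔ μ) ⊔ F := by
    rw [← hWF, sup_right_comm]
  have hle : W ⊔ μ ≤ lam ⊔ μ := sup_le_sup_right hWle μ
  constructor
  · rintro ⟨hint, hcl, hcod⟩
    refine ⟨?_, ?_, ?_⟩
    · haveI := hint
      exact Submodule.finiteDimensional_of_le (inf_le_inf_right μ hWle)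
    · exact isClosed_sub_sup hlamclosed hμclosed hWclosed hWle hint hcl
    · -- finite codimension of `W ⊔ μ`
      haveI := hcod
      set S : Submodule ℝ (H ⧸ (W ⊔ μ)) := (lam ⊔ μ).map (W ⊔ μ).mkQ with hS
      have hSfd : FiniteDimensional ℝ S := by
        have h0 : (W ⊔ μ).map (W ⊔ μ).mkQ = ⊥ := by
          ext x
          simp only [Submodule.mem_map, Submodule.mem_bot]
          constructor
          · rintro ⟨y, hy, rfl⟩
            simpa [Submodule.Quotient.mk_eq_zero] using hy
          · rintro rfl
            exact ⟨0, zero_mem _, map_zero _⟩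
        have h1 : S = F.map (W ⊔ μ).mkQ := by
          rw [hS, hsup, Submodule.map_sup, h0, bot_sup_eq]
        rw [h1]
        exact Module.Finite.map F _
      have hQfd : FiniteDimensional ℝ ((H ⧸ (W ⊔ μ)) ⧸ S) := by
        have e := Submodule.quotientQuotientEquivQuotient (W ⊔ μ) (lam ⊔ μ) hle
        exact e.symm.finiteDimensional
      exact fd_of_fd_quot S hSfd hQfd
  · rintro ⟨hint, hcl, hcod⟩
    refine ⟨?_, ?_, ?_⟩
    · -- finite dimensionality of `lam ⊓ μ`
      haveI := hint
      set W' := W.comap lam.subtype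
      set V : Submodule ℝ ↥(lam ⊓ μ) := (W ⊓ μ).comap (lam ⊓ μ).subtype with hV
      set g : ↥(lam ⊓ μ) →ₗ[ℝ] (↥lam ⧸ W') :=
        W'.mkQ.comp (Submodule.inclusion inf_le_left) with hg
      have hker : LinearMap.ker g = V := by
        ext x
        simp only [hg, hV, LinearMap.mem_ker, LinearMap.comp_apply, Submodule.mkQ_apply,
          Submodule.Quotient.mk_eq_zero, Submodule.mem_comap, Submodule.mem_inf]
        constructor
        · intro hx
          exact ⟨hx, x.2.2⟩
        · intro hx; exact hx.1
      haveI hVfd : FiniteDimensional ℝ V := by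
        have e := Submodule.comapSubtypeEquivOfLe (inf_le_inf_right μ hWle)
        exact e.symm.finiteDimensional
      have hQ : FiniteDimensional ℝ (↥(lam ⊓ μ) ⧸ V) := by
        haveI : FiniteDimensional ℝ (LinearMap.range g) :=
          FiniteDimensional.finiteDimensional_submodule _
        have : FiniteDimensional ℝ (↥(lam ⊓ μ) ⧸ LinearMap.ker g) :=
          g.quotKerEquivRange.symm.finiteDimensional
        rwa [hker] at this
      exact fd_of_fd_quot V hVfd hQ
    · rw [hsup]
      exact isClosed_sup_fd _ _ hcl
    · haveI := hcod
      set f : (H ⧸ (W ⊔ μ)) →ₗ[ℝ] (H ⧸ (lam ⊔ μ)) :=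
        Submodule.mapQ (W ⊔ μ) (lam ⊔ μ) LinearMap.id hle with hf
      have hsurj : Function.Surjective f := by
        intro x
        obtain ⟨y, rfl⟩ := Submodule.Quotient.mk_surjective _ x
        exact ⟨Submodule.Quotient.mk y, by simp [hf, Submodule.mapQ_apply]⟩
      exact Module.Finite.of_surjective f hsurj
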